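/- arXiv:1502.04877 — 6 statements merged into one kernel-verified Lean document; each statement's English description precedes it below -/
import Mathlib

section
/- Let u, v ∈ ℝ (interpreted as u(y) and u'(y)), ψ ∈ ℂ, and λ ∈ ℂ with λ ≠ 0. Let Ω be the 3×3 complex matrix Ω = !![−i·v/2, −i·λ·conj(ψ)·e^{−u}, i·λ⁻¹·e^{u/2}; −i·λ⁻¹·ψ·e^{−u}, i·v/2, i·λ·e^{u/2}; i·λ·e^{u/2}, i·λ⁻¹·e^{u/2}, 0]. Then for every μ ∈ ℂ, det(μ • 1 − Ω) = μ³ + (2e^{u} + |ψ|²·e^{−2u} + v²/4)·μ − i·(λ⁻³·ψ + λ³·conj(ψ)). -/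
set_option maxHeartbeats 1600000 in
/-- The characteristic polynomial of the Maurer–Cartan coefficient
matrix `Ω` of the extended frame is
`det(μ•1 − Ω) = μ³ + (2e^u + |ψ|² e^{−2u} + v²/4) μ − i(λ⁻³ ψ + λ³ ψ̄)`. -/
theorem stmt_6 (u v : ℝ) (ψ lam : ℂ) (hlam : lam ≠ 0)
    (Ω : Matrix (Fin 3) (Fin 3) ℂ)
    (hΩ : Ω = !![-Complex.I * (v : ℂ) / 2,
                 -Complex.I * lam * (starRingEnd ℂ) ψ * (Real.exp (-u) : ℂ),
                 Complex.I * lam⁻¹ * (Real.exp (u / 2) : ℂ);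
                 -Complex.I * lam⁻¹ * ψ * (Real.exp (-u) : ℂ),
                 Complex.I * (v : ℂ) / 2,
                 Complex.I * lam * (Real.exp (u / 2) : ℂ);
                 Complex.I * lam * (Real.exp (u / 2) : ℂ),
                 Complex.I * lam⁻¹ * (Real.exp (u / 2) : ℂ), 0]) :
    ∀ μ : ℂ, (μ • (1 : Matrix (Fin 3) (Fin 3) ℂ) - Ω).det
      = μ ^ 3
        + ((2 * Real.exp u + ‖ψ‖ ^ 2 * Real.exp (-2 * u) + v ^ 2 / 4 : ℝ) : ℂ) * μ
        - Complex.I * (lam⁻¹ ^ 3 * ψ + lam ^ 3 * (starRingEnd ℂ) ψ) := by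
  intro μ
  subst hΩ
  have h1 : Complex.exp (↑u * (1 / 2)) ^ 2 = Complex.exp ↑u := by
    rw [← Complex.exp_nat_mul]; push_cast; ring_nf
  have h2 : Complex.exp (-(u:ℂ)) ^ 2 = Complex.exp (-((u:ℂ) * 2)) := by
    rw [← Complex.exp_nat_mul]; ring_nf
  have h3 : ((‖ψ‖ : ℝ) : ℂ) ^ 2 = ψ * (starRingEnd ℂ) ψ := by
    rw [← Complex.ofReal_pow, Complex.sq_norm, ← Complex.mul_conj]
  simp only [Matrix.det_fin_three, Matrix.sub_apply, Matrix.smul_apply, Matrix.one_apply,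
    Matrix.cons_val', Matrix.cons_val_zero, Matrix.cons_val_one, Matrix.head_cons,
    Matrix.empty_val', Matrix.cons_val_fin_one, Matrix.head_fin_const, Matrix.cons_val_two,
    Matrix.tail_cons, smul_eq_mul]
  norm_num
  push_cast
  field_simp
  ring_nf
  rw [show Complex.I ^ 2 = -1 from Complex.I_sq, show Complex.I ^ 3 = -Complex.I by
    rw [pow_succ, Complex.I_sq]; ring]
  ring_nf
  simp only [h1, h2, h3]
  field_simp
  ring_nf
  have h4 : Complex.exp (u:ℂ) * Complex.exp (-(u:ℂ)) = 1 := by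
    rw [← Complex.exp_add]; simp
  linear_combination (-(lam ^ 6 * (starRingEnd ℂ) ψ * Complex.I * 16)
    - ψ * Complex.I * 16) * h4
end

section
/- Let a, b, λ ∈ ℂ with |λ| = 1, and let D be the 3×3 complex matrix D = !![0, −λ·conj(b), λ⁻¹·a; λ⁻¹·b, 0, −λ·conj(a); −λ·conj(a), λ⁻¹·a, 0]. Set ψ := −i·a²·b and β := 2|a|² + |b|². Suppose μ ∈ ℂ satisfies μ³ + β·μ − i·(λ⁻³·ψ + λ³·conj(ψ)) = 0. Then the vector s_μ := (|a|² + μ², λ⁻¹·b·μ + λ²·conj(a)², λ⁻²·a·b − λ·conj(a)·μ) ∈ Fin 3 → ℂ satisfies D.mulVec s_μ = μ • s_μ; that is, s_μ is an eigenvector of D for the eigenvalue μ. -/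
/-- If `μ` is a root of the characteristic polynomial
`μ³ + βμ − i(λ⁻³ψ + λ³ψ̄)` of the potential matrix `D`, then
`s_μ = (|a|² + μ², λ⁻¹bμ + λ²ā², λ⁻²ab − λāμ)` is an eigenvector of `D` for the
eigenvalue `μ`. -/
theorem stmt_9 (a b lam : ℂ) (hlam : ‖lam‖ = 1)
    (D : Matrix (Fin 3) (Fin 3) ℂ)
    (hD : D = !![0, -lam * (starRingEnd ℂ) b, lam⁻¹ * a;
                 lam⁻¹ * b, 0, -lam * (starRingEnd ℂ) a;
                 -lam * (starRingEnd ℂ) a, lam⁻¹ * a, 0])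
    (ψ : ℂ) (hψ : ψ = -Complex.I * a ^ 2 * b)
    (β : ℝ) (hβ : β = 2 * ‖a‖ ^ 2 + ‖b‖ ^ 2)
    (μ : ℂ)
    (hμ : μ ^ 3 + (β : ℂ) * μ
        - Complex.I * (lam⁻¹ ^ 3 * ψ + lam ^ 3 * (starRingEnd ℂ) ψ) = 0)
    (s : Fin 3 → ℂ)
    (hs : s = ![(‖a‖ : ℂ) ^ 2 + μ ^ 2,
                lam⁻¹ * b * μ + lam ^ 2 * ((starRingEnd ℂ) a) ^ 2,
                lam⁻¹ ^ 2 * a * b - lam * (starRingEnd ℂ) a * μ]) :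
    D.mulVec s = μ • s := by
  set ca := (starRingEnd ℂ) a with hca
  set cb := (starRingEnd ℂ) b with hcb
  have hl : lam ≠ 0 := by
    intro h; rw [h] at hlam; simp at hlam
  have hR : lam * lam⁻¹ = 1 := mul_inv_cancel₀ hl
  have ha : ((‖a‖ : ℂ)) ^ 2 = a * ca := by
    rw [hca, Complex.mul_conj, ← Complex.sq_norm]; norm_cast
  have hb : ((‖b‖ : ℂ)) ^ 2 = b * cb := by
    rw [hcb, Complex.mul_conj, ← Complex.sq_norm]; norm_cast
  have hβc : (β : ℂ) = 2 * (a * ca) + b * cb := by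
    rw [hβ]; push_cast; rw [ha, hb]
  have hψc : (starRingEnd ℂ) ψ = Complex.I * ca ^ 2 * cb := by
    rw [hψ]; simp [hca, hcb, map_mul, map_pow, Complex.conj_I]
  have hI : Complex.I ^ 2 = -1 := Complex.I_sq
  rw [hψc, hψ, hβc] at hμ
  have hμ' : μ ^ 3 + (2 * (a * ca) + b * cb) * μ
      - lam⁻¹ ^ 3 * a ^ 2 * b + lam ^ 3 * ca ^ 2 * cb = 0 := by
    linear_combination hμ - (lam⁻¹ ^ 3 * a ^ 2 * b - lam ^ 3 * ca ^ 2 * cb) * hI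
  subst hD hs
  funext i
  fin_cases i <;>
    simp [Matrix.mulVec, dotProduct, Fin.sum_univ_three, ha]
  · linear_combination -hμ' - (a * ca + b * cb) * μ * hR
  · linear_combination (-(lam⁻¹ * a * b * ca)) * hR
  · linear_combination (lam * a * ca ^ 2) * hR
end

section
/- Let T > 0, let u : ℝ → ℝ be continuously differentiable, even (u(−y) = u(y) for all y), and periodic with period 2T (u(y + 2T) = u(y) for all y). Let ψ ∈ ℂ and λ ∈ ℂ with |λ| = 1, and set ε := exp(iπ/3). Assume λ³·conj(ψ) − λ⁻³·ψ − e^{u(s)}·u'(s) ≠ 0 and (ελ)³·conj(ψ) − (ελ)⁻³·ψ − e^{u(s)}·u'(s) ≠ 0 for all s ∈ ℝ. Define β₁(y, μ) := ∫₀^y (2i·μ³·conj(ψ) − i·u'(s)·e^{u(s)}) / (μ³·conj(ψ) − μ⁻³·ψ − e^{u(s)}·u'(s)) ds. Then: (1) β₁(y + 2mT, λ) = β₁(y, λ) + m·β₁(2T, λ) for all y ∈ ℝ and m ∈ ℤ; (2) β₁(2T, λ) − conj(β₁(2T, λ)) = 4iT; (3) Re(β₁(2T, ελ)) = Re(β₁(2T,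 λ)). -/
open intervalIntegral MeasureTheory in
private lemma interval_integral_conj' {f : ℝ → ℂ} (a b : ℝ) :
    (∫ x in a..b, (starRingEnd ℂ) (f x)) = (starRingEnd ℂ) (∫ x in a..b, f x) := by
  rw [intervalIntegral, intervalIntegral, map_sub, integral_conj, integral_conj]

open intervalIntegral in
/-- Properties of the first Iwasawa coefficient function
`β₁(y, μ) = ∫₀^y (2iμ³ψ̄ − i u' e^u)/(μ³ψ̄ − μ⁻³ψ − e^u u') ds` for an even,
`2T`-periodic `C¹` metric function `u`:
(1) `β₁(y + 2mT, λ) = β₁(y, λ) + m β₁(2T, λ)`;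
(2) `β₁(2T, λ) − conj(β₁(2T, λ)) = 4iT`;
(3) `Re β₁(2T, ελ) = Re β₁(2T, λ)` where `ε = e^{iπ/3}`. -/
theorem stmt_11 (T : ℝ) (hT : 0 < T) (u : ℝ → ℝ)
    (hu : ContDiff ℝ 1 u)
    (heven : ∀ y : ℝ, u (-y) = u y)
    (hper : ∀ y : ℝ, u (y + 2 * T) = u y)
    (ψ lam : ℂ) (hlam : ‖lam‖ = 1)
    (ε : ℂ) (hε : ε = Complex.exp (Complex.I * Real.pi / 3))
    (hden : ∀ s : ℝ,
      lam ^ 3 * (starRingEnd ℂ) ψ - lam⁻¹ ^ 3 * ψ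
        - (Real.exp (u s) : ℂ) * ((deriv u s : ℝ) : ℂ) ≠ 0)
    (hden' : ∀ s : ℝ,
      (ε * lam) ^ 3 * (starRingEnd ℂ) ψ - (ε * lam)⁻¹ ^ 3 * ψ
        - (Real.exp (u s) : ℂ) * ((deriv u s : ℝ) : ℂ) ≠ 0)
    (β₁ : ℝ → ℂ → ℂ)
    (hβ₁ : ∀ (y : ℝ) (μ : ℂ), β₁ y μ =
      ∫ s in (0 : ℝ)..y,
        (2 * Complex.I * μ ^ 3 * (starRingEnd ℂ) ψ
            - Complex.I * ((deriv u s : ℝ) : ℂ) * (Real.exp (u s) : ℂ)) /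
          (μ ^ 3 * (starRingEnd ℂ) ψ - μ⁻¹ ^ 3 * ψ
            - (Real.exp (u s) : ℂ) * ((deriv u s : ℝ) : ℂ))) :
    (∀ (y : ℝ) (m : ℤ), β₁ (y + 2 * (m : ℝ) * T) lam = β₁ y lam + (m : ℂ) * β₁ (2 * T) lam) ∧
    (β₁ (2 * T) lam - (starRingEnd ℂ) (β₁ (2 * T) lam) = 4 * Complex.I * (T : ℂ)) ∧
    ((β₁ (2 * T) (ε * lam)).re = (β₁ (2 * T) lam).re) := by
  set f : ℂ → ℝ → ℂ := fun μ s =>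
    (2 * Complex.I * μ ^ 3 * (starRingEnd ℂ) ψ
        - Complex.I * ((deriv u s : ℝ) : ℂ) * (Real.exp (u s) : ℂ)) /
      (μ ^ 3 * (starRingEnd ℂ) ψ - μ⁻¹ ^ 3 * ψ
        - (Real.exp (u s) : ℂ) * ((deriv u s : ℝ) : ℂ)) with hf
  -- basic facts
  have hlam0 : lam ≠ 0 := by
    intro h; rw [h] at hlam; simp at hlam
  have hconjlam : (starRingEnd ℂ) lam = lam⁻¹ := by
    have h1 : lam * (starRingEnd ℂ) lam = 1 := by
      rw [Complex.mul_conj]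
      norm_cast
      rw [← Complex.sq_norm, hlam]; norm_num
    field_simp
    linear_combination h1
  have hε3 : ε ^ 3 = -1 := by
    rw [hε, ← Complex.exp_nat_mul]
    have h3 : ((3:ℕ) : ℂ) * (Complex.I * ↑Real.pi / 3) = ↑Real.pi * Complex.I := by
      push_cast; ring
    rw [h3, Complex.exp_pi_mul_I]
  have hεlam3 : (ε * lam) ^ 3 = -(lam ^ 3) := by rw [mul_pow, hε3]; ring
  have hεlaminv3 : (ε * lam)⁻¹ ^ 3 = -(lam⁻¹ ^ 3) := by
    rw [inv_pow, inv_pow, hεlam3, inv_neg]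
  -- derivative facts
  have hcont_deriv : Continuous (deriv u) := hu.continuous_deriv le_rfl
  have hder_odd : ∀ s : ℝ, deriv u (-s) = -deriv u s := by
    intro s
    have h1 : (fun x : ℝ => u (-x)) = u := funext heven
    have h2 := deriv_comp_neg u s
    rw [h1] at h2
    linarith [h2]
  have hder_per : ∀ s : ℝ, deriv u (s + 2 * T) = deriv u s := by
    intro s
    have h1 : (fun x : ℝ => u (x + 2 * T)) = u := funext hper
    have h2 := deriv_comp_add_const u (2 * T) s
    rw [h1] at h2
    exact h2.symm
  -- continuity of integrands
  have hcont : ∀ μ : ℂ,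
      (∀ s : ℝ, μ ^ 3 * (starRingEnd ℂ) ψ - μ⁻¹ ^ 3 * ψ
        - (Real.exp (u s) : ℂ) * ((deriv u s : ℝ) : ℂ) ≠ 0) → Continuous (f μ) := by
    intro μ hμ
    have hc1 : Continuous fun s : ℝ => ((Real.exp (u s) : ℂ)) :=
      Complex.continuous_ofReal.comp (Real.continuous_exp.comp hu.continuous)
    have hc2 : Continuous fun s : ℝ => ((deriv u s : ℝ) : ℂ) :=
      Complex.continuous_ofReal.comp hcont_deriv
    exact ((continuous_const.sub ((continuous_const.mul hc2).mul hc1)).div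
      ((continuous_const.sub (hc1.mul hc2))) hμ)
  have hclam : Continuous (f lam) := hcont lam hden
  have hclam' : Continuous (f (ε * lam)) := hcont (ε * lam) hden'
  have hint : ∀ a b : ℝ, IntervalIntegrable (f lam) MeasureTheory.volume a b :=
    fun a b => hclam.intervalIntegrable a b
  have hint' : ∀ a b : ℝ, IntervalIntegrable (f (ε * lam)) MeasureTheory.volume a b :=
    fun a b => hclam'.intervalIntegrable a b
  -- periodicity of integrand
  have hfper : Function.Periodic (f lam) (2 * T) := by
    intro s; simp only [hf, hper s, hder_per s]
  -- key pointwise identity 1 : f lam (-s) = f (ε lam) s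
  have hkey1 : ∀ s : ℝ, f lam (-s) = f (ε * lam) s := by
    intro s
    simp only [hf, hder_odd s, heven s, hεlam3, hεlaminv3, Complex.ofReal_neg]
    rw [div_eq_div_iff]
    · ring
    · intro h0
      apply hden (-s)
      rw [hder_odd s, heven s]
      simp only [Complex.ofReal_neg]
      linear_combination h0
    · intro h0
      apply hden' s
      rw [hεlam3, hεlaminv3]
      linear_combination h0
  -- key pointwise identity 2 : f (ε lam) s = conj (f lam s) + 2i
  have hkey2 : ∀ s : ℝ, f (ε * lam) s = (starRingEnd ℂ) (f lam s) + 2 * Complex.I := by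
    intro s
    have hne1 : -(lam ^ 3) * (starRingEnd ℂ) ψ - -(lam⁻¹ ^ 3) * ψ
        - (Real.exp (u s) : ℂ) * ((deriv u s : ℝ) : ℂ) ≠ 0 := by
      intro h0
      apply hden' s
      rw [hεlam3, hεlaminv3]
      linear_combination h0
    have hne2 : lam⁻¹ ^ 3 * ψ - (lam⁻¹)⁻¹ ^ 3 * (starRingEnd ℂ) ψ
        - (Real.exp (u s) : ℂ) * ((deriv u s : ℝ) : ℂ) ≠ 0 := by
      intro h0
      apply hden' s
      rw [hεlam3, hεlaminv3, inv_inv] at *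
      linear_combination h0
    simp only [hf, hεlam3, hεlaminv3, map_div₀, map_sub, map_mul, map_pow, map_inv₀,
      map_ofNat, Complex.conj_I, Complex.conj_conj, Complex.conj_ofReal, hconjlam]
    rw [div_add' _ _ _ hne2, div_eq_div_iff hne1 hne2]
    field_simp
    ring
  -- change of variable : β₁(2T, ελ) = β₁(2T, λ)
  have hchange : β₁ (2 * T) (ε * lam) = β₁ (2 * T) lam := by
    rw [hβ₁, hβ₁]
    calc (∫ s in (0:ℝ)..(2*T), f (ε * lam) s)
        = ∫ s in (0:ℝ)..(2*T), f lam (-s) := by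
          refine intervalIntegral.integral_congr fun s _ => (hkey1 s).symm
      _ = ∫ s in (-(2*T))..(-(0:ℝ)), f lam s := intervalIntegral.integral_comp_neg _
      _ = ∫ s in (0:ℝ)..(2*T), f lam s := by
          have h5 := hfper.intervalIntegral_add_eq (-(2*T)) 0
          rw [zero_add] at h5
          rw [neg_zero, ← h5]
          norm_num
  refine ⟨?_, ?_, ?_⟩
  · intro y m
    have h2 : y + 2 * (m : ℝ) * T = y + m • (2 * T) := by
      rw [zsmul_eq_mul]; push_cast; ring
    rw [hβ₁, hβ₁, hβ₁, h2]
    rw [← intervalIntegral.integral_add_adjacent_intervals (hint 0 y) (hint y (y + m • (2 * T)))]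
    congr 1
    rw [hfper.intervalIntegral_add_zsmul_eq m y hint]
    rw [hfper.intervalIntegral_add_eq y 0, zero_add, zsmul_eq_mul]
  · have hconjβ : (starRingEnd ℂ) (β₁ (2 * T) lam)
        = β₁ (2 * T) lam - 4 * Complex.I * (T : ℂ) := by
      rw [hβ₁, ← interval_integral_conj']
      have h6 : (∫ s in (0:ℝ)..(2*T), (starRingEnd ℂ) (f lam s))
          = ∫ s in (0:ℝ)..(2*T), (f (ε * lam) s - 2 * Complex.I) := by
        refine intervalIntegral.integral_congr fun s _ => ?_
        rw [hkey2 s]; ring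
      rw [h6, intervalIntegral.integral_sub (hint' 0 (2*T))
        (intervalIntegrable_const), intervalIntegral.integral_const]
      rw [← hβ₁, hchange, hβ₁]
      rw [sub_zero, Complex.real_smul]
      push_cast
      ring
    rw [hconjβ]; ring
  · rw [hchange]
end

section
/- Let T > 0, let u : ℝ → ℝ be continuously differentiable, even (u(−y) = u(y) for all y), and periodic with period 2T (u(y + 2T) = u(y) for all y). Let ψ ∈ ℂ and λ ∈ ℂ with |λ| = 1, and set ε := exp(iπ/3). Assume λ³·conj(ψ) − λ⁻³·ψ − e^{u(s)}·u'(s) ≠ 0 and (ελ)³·conj(ψ) − (ελ)⁻³·ψ − e^{u(s)}·u'(s) ≠ 0 for all s ∈ ℝ. Define β₂(y, μ) := ∫₀^y 2e^{u(s)} / (μ³·conj(ψ) − μ⁻³·ψ − e^{u(s)}·u'(s)) ds. Then: (1) β₂(y + 2mT, λ) = β₂(y, λ) + m·β₂(2T, λ) for all y ∈ ℝ and m ∈ ℤ; (2) β₂(2T, λ) + conj(β₂(2T, λ)) = 0; (3) Im(β₂(2T, ελ)) = −Im(β₂(2T, λ)). -/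
open MeasureTheory intervalIntegral

private lemma conj_intervalIntegral (f : ℝ → ℂ) (a b : ℝ) :
    (starRingEnd ℂ) (∫ x in a..b, f x) = ∫ x in a..b, (starRingEnd ℂ) (f x) := by
  simp only [intervalIntegral, map_sub, ← integral_conj]

/-- Properties of the second Iwasawa coefficient function
`β₂(y, μ) = ∫₀^y 2e^u/(μ³ψ̄ − μ⁻³ψ − e^u u') ds` for an even, `2T`-periodic `C¹`
metric function `u`:
(1) `β₂(y + 2mT, λ) = β₂(y, λ) + m β₂(2T, λ)`;
(2) `β₂(2T, λ) + conj(β₂(2T, λ)) = 0`;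
(3) `Im β₂(2T, ελ) = −Im β₂(2T, λ)` where `ε = e^{iπ/3}`. -/
theorem stmt_12 (T : ℝ) (hT : 0 < T) (u : ℝ → ℝ)
    (hu : ContDiff ℝ 1 u)
    (heven : ∀ y : ℝ, u (-y) = u y)
    (hper : ∀ y : ℝ, u (y + 2 * T) = u y)
    (ψ lam : ℂ) (hlam : ‖lam‖ = 1)
    (ε : ℂ) (hε : ε = Complex.exp (Complex.I * Real.pi / 3))
    (hden : ∀ s : ℝ,
      lam ^ 3 * (starRingEnd ℂ) ψ - lam⁻¹ ^ 3 * ψ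
        - (Real.exp (u s) : ℂ) * ((deriv u s : ℝ) : ℂ) ≠ 0)
    (hden' : ∀ s : ℝ,
      (ε * lam) ^ 3 * (starRingEnd ℂ) ψ - (ε * lam)⁻¹ ^ 3 * ψ
        - (Real.exp (u s) : ℂ) * ((deriv u s : ℝ) : ℂ) ≠ 0)
    (β₂ : ℝ → ℂ → ℂ)
    (hβ₂ : ∀ (y : ℝ) (μ : ℂ), β₂ y μ =
      ∫ s in (0 : ℝ)..y,
        (2 * (Real.exp (u s) : ℂ)) /
          (μ ^ 3 * (starRingEnd ℂ) ψ - μ⁻¹ ^ 3 * ψ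
            - (Real.exp (u s) : ℂ) * ((deriv u s : ℝ) : ℂ))) :
    (∀ (y : ℝ) (m : ℤ), β₂ (y + 2 * (m : ℝ) * T) lam = β₂ y lam + (m : ℂ) * β₂ (2 * T) lam) ∧
    (β₂ (2 * T) lam + (starRingEnd ℂ) (β₂ (2 * T) lam) = 0) ∧
    ((β₂ (2 * T) (ε * lam)).im = -(β₂ (2 * T) lam).im) := by
  -- basic facts about u and its derivative
  have hu_cont : Continuous u := hu.continuous
  have hu'_cont : Continuous (deriv u) := hu.continuous_deriv le_rfl
  have hu_per : Function.Periodic u (2 * T) := hper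
  have hu'_per : Function.Periodic (deriv u) (2 * T) := by
    intro y
    have : (fun x : ℝ => u (x + 2 * T)) = u := funext hper
    calc deriv u (y + 2 * T) = deriv (fun x : ℝ => u (x + 2 * T)) y :=
          (deriv_comp_add_const u (2 * T) y).symm
      _ = deriv u y := by rw [this]
  have hu'_odd : ∀ y : ℝ, deriv u (-y) = -deriv u y := by
    intro y
    have h1 : (fun x : ℝ => u (-x)) = u := funext heven
    have := deriv_comp_neg u y
    rw [h1] at this
    linarith [this]
  -- the integrand for parameter μ
  set g : ℂ → ℝ → ℂ := fun μ s =>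
    (2 * (Real.exp (u s) : ℂ)) /
      (μ ^ 3 * (starRingEnd ℂ) ψ - μ⁻¹ ^ 3 * ψ
        - (Real.exp (u s) : ℂ) * ((deriv u s : ℝ) : ℂ)) with hg
  have hcontden : ∀ μ : ℂ, Continuous (fun s : ℝ =>
      μ ^ 3 * (starRingEnd ℂ) ψ - μ⁻¹ ^ 3 * ψ
        - (Real.exp (u s) : ℂ) * ((deriv u s : ℝ) : ℂ)) := by
    intro μ
    fun_prop
  have hcont : Continuous (g lam) := by
    apply Continuous.div (by fun_prop) (hcontden lam)
    exact fun s => hden s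
  have hcont' : Continuous (g (ε * lam)) := by
    apply Continuous.div (by fun_prop) (hcontden (ε * lam))
    exact fun s => hden' s
  -- periodicity of the integrands
  have hgper : ∀ μ : ℂ, Function.Periodic (g μ) (2 * T) := by
    intro μ s
    simp only [hg, hu_per s, hu'_per s]
  have hint : ∀ t₁ t₂ : ℝ, IntervalIntegrable (g lam) volume t₁ t₂ :=
    fun t₁ t₂ => hcont.intervalIntegrable t₁ t₂
  -- norm of lam
  have hlamne : lam ≠ 0 := by
    intro h; rw [h] at hlam; simp at hlam
  have hconjlam : (starRingEnd ℂ) lam = lam⁻¹ := by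
    rw [Complex.inv_def, Complex.normSq_eq_norm_sq, hlam]
    simp
  -- key reflection identity: conj (g lam s) = - g lam (-s)
  have hconjg : ∀ s : ℝ, (starRingEnd ℂ) (g lam s) = -(g lam (-s)) := by
    intro s
    simp only [hg, heven s, hu'_odd s]
    rw [map_div₀]
    have h1 : (starRingEnd ℂ) (2 * (Real.exp (u s) : ℂ)) = 2 * (Real.exp (u s) : ℂ) := by
      simp [map_mul, map_ofNat, ← Complex.exp_conj, Complex.conj_ofReal]
    rw [h1]
    have h2 : (starRingEnd ℂ) (lam ^ 3 * (starRingEnd ℂ) ψ - lam⁻¹ ^ 3 * ψ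
        - (Real.exp (u s) : ℂ) * ((deriv u s : ℝ) : ℂ))
        = -(lam ^ 3 * (starRingEnd ℂ) ψ - lam⁻¹ ^ 3 * ψ
        - (Real.exp (u s) : ℂ) * ((-(deriv u s) : ℝ) : ℂ)) := by
      simp only [map_sub, map_mul, map_pow, hconjlam, Complex.conj_conj,
        Complex.conj_ofReal, map_inv₀]
      rw [inv_inv]
      push_cast
      ring
    rw [h2, div_neg, Complex.ofReal_neg]
  -- key rotation identity: g (ε*lam) s = - g lam (-s)
  have hε3 : ε ^ 3 = -1 := by
    rw [hε, ← Complex.exp_nat_mul,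
      show ((3 : ℕ) : ℂ) * (Complex.I * (Real.pi : ℂ) / 3) = (Real.pi : ℂ) * Complex.I by
        push_cast; ring, Complex.exp_pi_mul_I]
  have hεne : ε ≠ 0 := by
    rw [hε]; exact Complex.exp_ne_zero _
  have hrotg : ∀ s : ℝ, g (ε * lam) s = -(g lam (-s)) := by
    intro s
    simp only [hg, heven s, hu'_odd s]
    have h2 : (ε * lam) ^ 3 * (starRingEnd ℂ) ψ - (ε * lam)⁻¹ ^ 3 * ψ
        - (Real.exp (u s) : ℂ) * ((deriv u s : ℝ) : ℂ)
        = -(lam ^ 3 * (starRingEnd ℂ) ψ - lam⁻¹ ^ 3 * ψ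
        - (Real.exp (u s) : ℂ) * ((-(deriv u s) : ℝ) : ℂ)) := by
      have hinv : (ε * lam)⁻¹ ^ 3 = -(lam⁻¹ ^ 3) := by
        rw [mul_inv, mul_pow, inv_pow, hε3]
        field_simp
      rw [mul_pow, hε3, hinv]
      push_cast
      ring
    rw [h2, div_neg, Complex.ofReal_neg]
  -- integral over [-2T, 0] equals integral over [0, 2T]
  have hshift : (∫ s in (-(2*T) : ℝ)..(0:ℝ), g lam s) = ∫ s in (0:ℝ)..(2*T), g lam s := by
    have := (hgper lam).intervalIntegral_add_eq (-(2*T)) 0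
    simpa using this
  -- the reflected integral
  have hrefl : (∫ s in (0:ℝ)..(2*T), g lam (-s)) = ∫ s in (0:ℝ)..(2*T), g lam s := by
    rw [intervalIntegral.integral_comp_neg (fun s => g lam s)]
    simpa using hshift
  have hβl : ∀ (y : ℝ) (μ : ℂ), β₂ y μ = ∫ s in (0:ℝ)..y, g μ s := fun y μ => hβ₂ y μ
  refine ⟨?_, ?_, ?_⟩
  · -- (1) quasi-periodicity
    intro y m
    rw [hβl, hβl, hβl]
    have key := (hgper lam).intervalIntegral_add_zsmul_eq m y hint
    have h1 : (∫ s in (0:ℝ)..(y + 2 * (m:ℝ) * T), g lam s)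
        = (∫ s in (0:ℝ)..y, g lam s) + ∫ s in y..(y + m • (2*T)), g lam s := by
      rw [intervalIntegral.integral_add_adjacent_intervals (hint 0 y) (hint y _)]
      congr 1
      push_cast [zsmul_eq_mul]
      ring
    rw [h1, key, (hgper lam).intervalIntegral_add_eq y 0]
    simp [zsmul_eq_mul]
  · -- (2) purely imaginary
    rw [hβl, conj_intervalIntegral]
    have : (∫ s in (0:ℝ)..(2*T), (starRingEnd ℂ) (g lam s))
        = -∫ s in (0:ℝ)..(2*T), g lam (-s) := by
      rw [← intervalIntegral.integral_neg]
      exact intervalIntegral.integral_congr fun s _ => hconjg s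
    rw [this, hrefl]
    ring
  · -- (3) imaginary parts
    rw [hβl, hβl]
    have : (∫ s in (0:ℝ)..(2*T), g (ε * lam) s)
        = -∫ s in (0:ℝ)..(2*T), g lam (-s) := by
      rw [← intervalIntegral.integral_neg]
      exact intervalIntegral.integral_congr fun s _ => hrotg s
    rw [this, hrefl]
    simp
end

section
/- Let T > 0 and p_f > 0 be real, and let L be an additive subgroup of ℂ such that: (i) for every ω ∈ L there exists m ∈ ℤ with Im(ω) = 2Tm; (ii) 4T·i ∈ L; (iii) for every x ∈ ℝ, (x : ℂ) ∈ L if and only if there exists n ∈ ℤ with x = n·p_f; (iv) 2T·i ∉ L. Then either L = {n·p_f + m·(4T·i) : n, m ∈ ℤ} or L = {n·p_f + m·(p_f/2 + 2T·i) : n, m ∈ ℤ}. -/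
/-- For a real cubic form, the period lattice `L` (all periods with
imaginary part in `2Tℤ`, containing `4Ti`, with real periods exactly `p_f ℤ`, and
not containing `2Ti`) is either `p_f ℤ + 4Ti ℤ` or `p_f ℤ + (p_f/2 + 2Ti) ℤ`. -/
theorem stmt_16 (T p_f : ℝ) (hT : 0 < T) (hp : 0 < p_f) (L : AddSubgroup ℂ)
    (hIm : ∀ ω ∈ L, ∃ m : ℤ, ω.im = 2 * T * (m : ℝ))
    (h4T : (4 * (T : ℂ) * Complex.I) ∈ L)
    (hreal : ∀ x : ℝ, (x : ℂ) ∈ L ↔ ∃ n : ℤ, x = (n : ℝ) * p_f)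
    (h2T : (2 * (T : ℂ) * Complex.I) ∉ L) :
    (∀ z : ℂ, z ∈ L ↔ ∃ n m : ℤ,
        z = (n : ℂ) * (p_f : ℂ) + (m : ℂ) * (4 * (T : ℂ) * Complex.I)) ∨
    (∀ z : ℂ, z ∈ L ↔ ∃ n m : ℤ,
        z = (n : ℂ) * (p_f : ℂ) + (m : ℂ) * ((p_f / 2 : ℝ) + 2 * (T : ℂ) * Complex.I)) := by
  have hpfL : ∀ n : ℤ, ((n : ℂ) * (p_f : ℂ)) ∈ L := by
    intro n
    have h : ((n * p_f : ℝ) : ℂ) ∈ L := (hreal _).2 ⟨n, rfl⟩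
    push_cast at h
    exact h
  have hrealz : ∀ ζ : ℂ, ζ ∈ L → ζ.im = 0 → ∃ n : ℤ, ζ = (n : ℂ) * p_f := by
    intro ζ hζ him
    have hζeq : ζ = ((ζ.re : ℝ) : ℂ) := Complex.ext (by simp) (by simp [him])
    obtain ⟨n, hn⟩ := (hreal ζ.re).1 (hζeq ▸ hζ)
    exact ⟨n, by rw [hζeq, hn]; push_cast; ring⟩
  have hmulmem : ∀ (u : ℂ), u ∈ L → ∀ m : ℤ, (m : ℂ) * u ∈ L := by
    intro u hu m
    have := L.zsmul_mem hu m
    rwa [zsmul_eq_mul] at this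
  by_cases hwL : (((p_f / 2 : ℝ) : ℂ) + 2 * (T : ℂ) * Complex.I) ∈ L
  · right
    intro z
    constructor
    · intro hz
      obtain ⟨m, hm⟩ := hIm z hz
      have hsub : z - (m : ℂ) * (((p_f / 2 : ℝ) : ℂ) + 2 * (T : ℂ) * Complex.I) ∈ L :=
        L.sub_mem hz (hmulmem _ hwL m)
      have him0 : (z - (m : ℂ) * (((p_f / 2 : ℝ) : ℂ) + 2 * (T : ℂ) * Complex.I)).im = 0 := by
        simp [Complex.sub_im, Complex.mul_im, hm]
        ring
      obtain ⟨n, hn⟩ := hrealz _ hsub him0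
      exact ⟨n, m, by linear_combination hn⟩
    · rintro ⟨n, m, rfl⟩
      exact L.add_mem (hpfL n) (hmulmem _ hwL m)
  · left
    intro z
    constructor
    · intro hz
      obtain ⟨m, hm⟩ := hIm z hz
      rcases Int.even_or_odd m with ⟨k, hk⟩ | ⟨k, hk⟩
      · have hsub : z - (k : ℂ) * (4 * (T : ℂ) * Complex.I) ∈ L :=
          L.sub_mem hz (hmulmem _ h4T k)
        have him0 : (z - (k : ℂ) * (4 * (T : ℂ) * Complex.I)).im = 0 := by
          simp [Complex.sub_im, Complex.mul_im, hm, hk]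
          push_cast
          ring
        obtain ⟨n, hn⟩ := hrealz _ hsub him0
        exact ⟨n, k, by linear_combination hn⟩
      · exfalso
        have hz' : z - (k : ℂ) * (4 * (T : ℂ) * Complex.I) ∈ L :=
          L.sub_mem hz (hmulmem _ h4T k)
        set ζ := z - (k : ℂ) * (4 * (T : ℂ) * Complex.I) with hζdef
        have hζim : ζ.im = 2 * T := by
          simp [hζdef, Complex.sub_im, Complex.mul_im, hm, hk]
          push_cast
          ring
        have h2ζ : ζ + ζ - 4 * (T : ℂ) * Complex.I ∈ L :=
          L.sub_mem (L.add_mem hz' hz') h4T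
        have h2im : (ζ + ζ - 4 * (T : ℂ) * Complex.I).im = 0 := by
          simp [Complex.sub_im, hζim]
          ring
        obtain ⟨n₀, hn₀⟩ := hrealz _ h2ζ h2im
        have hre : ζ.re + ζ.re = (n₀ : ℝ) * p_f := by
          have := congrArg Complex.re hn₀
          simpa using this
        rcases Int.even_or_odd n₀ with ⟨j, hj⟩ | ⟨j, hj⟩
        · apply h2T
          have hmem : ζ - (j : ℂ) * p_f ∈ L := L.sub_mem hz' (hpfL j)
          have heq : ζ - (j : ℂ) * p_f = 2 * (T : ℂ) * Complex.I := by
            apply Complex.ext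
            · simp only [Complex.sub_re, Complex.mul_re, Complex.mul_im]
              simp
              have : (n₀ : ℝ) = (j : ℝ) + (j : ℝ) := by exact_mod_cast congrArg Int.cast hj
              rw [this] at hre
              linarith
            · simp [hζim]
          rwa [heq] at hmem
        · apply hwL
          have hmem : ζ - (j : ℂ) * p_f ∈ L := L.sub_mem hz' (hpfL j)
          have heq : ζ - (j : ℂ) * p_f = ((p_f / 2 : ℝ) : ℂ) + 2 * (T : ℂ) * Complex.I := by
            apply Complex.ext
            · simp
              have : (n₀ : ℝ) = 2 * (j : ℝ) + 1 := by exact_mod_cast congrArg Int.cast hj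
              rw [this] at hre
              linarith
            · simp [hζim]
          rwa [heq] at hmem
    · rintro ⟨n, m, rfl⟩
      exact L.add_mem (hpfL n) (hmulmem _ h4T m)
end

section
/- Let d₁, d₂, β, B₁, B₂ ∈ ℝ with d₁ ≠ 0, d₂ ≠ 0 and d₁ ≠ d₂. For p ∈ ℝ and m ∈ ℤ, say P(p, m) holds if there exist l₁, l₂ ∈ ℤ with p·d_j − m·(B₁·d_j + B₂·(−d_j² + 2β/3)) = 2·l_j·π for j = 1, 2. Then the conjunction [there exists p ≠ 0 with P(p, 0)] and [there exist p ∈ ℝ and m ∈ ℤ with m ≠ 0 and P(p, m)] holds if and only if both of the following hold: (a) there exists q ∈ ℚ with d₁ = q·d₂; and (b) there exists q ∈ ℚ with B₂·(d₁·d₂ + 2β/3) = 2π·q. -/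
/-- Arithmetic torus condition: the surface admits both a real
period (`P(p, 0)` with `p ≠ 0`) and a non-real period (`P(p, m)` with `m ≠ 0`)
iff `d₁/d₂` is rational and `B₂(d₁d₂ + 2β/3)/(2π)` is rational. -/
theorem stmt_19 (d₁ d₂ β B₁ B₂ : ℝ) (h₁ : d₁ ≠ 0) (h₂ : d₂ ≠ 0) (h₁₂ : d₁ ≠ d₂)
    (P : ℝ → ℤ → Prop)
    (hP : ∀ (p : ℝ) (m : ℤ), P p m ↔ ∃ l₁ l₂ : ℤ,
      p * d₁ - (m : ℝ) * (B₁ * d₁ + B₂ * (-d₁ ^ 2 + 2 * β / 3)) = 2 * (l₁ : ℝ) * Real.pi ∧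
      p * d₂ - (m : ℝ) * (B₁ * d₂ + B₂ * (-d₂ ^ 2 + 2 * β / 3)) = 2 * (l₂ : ℝ) * Real.pi) :
    ((∃ p : ℝ, p ≠ 0 ∧ P p 0) ∧ (∃ (p : ℝ) (m : ℤ), m ≠ 0 ∧ P p m)) ↔
      ((∃ q : ℚ, d₁ = (q : ℝ) * d₂) ∧
        (∃ q : ℚ, B₂ * (d₁ * d₂ + 2 * β / 3) = 2 * Real.pi * (q : ℝ))) := by
  have hπ : Real.pi ≠ 0 := Real.pi_ne_zero
  constructor
  · rintro ⟨⟨p, hp, hPp⟩, p', m, hm, hPp'⟩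
    rw [hP] at hPp hPp'
    obtain ⟨l₁, l₂, e1, e2⟩ := hPp
    obtain ⟨k₁, k₂, f1, f2⟩ := hPp'
    push_cast at e1 e2 f1 f2
    simp only [zero_mul, sub_zero] at e1 e2
    have hl₂ : (l₂ : ℝ) ≠ 0 := by
      intro h
      rw [h] at e2
      simp at e2
      rcases e2 with e2 | e2 | e2 <;> simp_all
    have hA : d₁ * (l₂ : ℝ) = d₂ * (l₁ : ℝ) := by
      have : p * (d₁ * l₂ - d₂ * l₁) = 0 := by linear_combination (l₂:ℝ) * e1 - (l₁:ℝ) * e2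
      rcases mul_eq_zero.1 this with h | h
      · exact absurd h hp
      · linarith
    have hl₁₂ : (l₁ : ℝ) ≠ (l₂ : ℝ) := by
      intro h
      apply h₁₂
      have : d₁ * (l₂:ℝ) = d₂ * (l₂:ℝ) := by rw [hA, h]
      exact mul_right_cancel₀ hl₂ this
    constructor
    · refine ⟨(l₁ : ℚ) / (l₂ : ℚ), ?_⟩
      have hl₂' : ((l₂ : ℚ) : ℝ) ≠ 0 := by push_cast; exact hl₂
      push_cast
      field_simp
      linarith [hA]
    · -- key: m*B₂*(d₁-d₂)*(d₁*d₂+2β/3) = 2π(k₁d₂ - k₂d₁)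
      have hB : (m:ℝ) * B₂ * (d₁ - d₂) * (d₁ * d₂ + 2 * β / 3)
          = 2 * Real.pi * ((k₁:ℝ) * d₂ - (k₂:ℝ) * d₁) := by
        linear_combination d₂ * f1 - d₁ * f2
      have hm' : (m : ℝ) ≠ 0 := Int.cast_ne_zero.2 hm
      have hden : ((m * (l₁ - l₂) : ℤ) : ℝ) ≠ 0 := by
        push_cast
        exact mul_ne_zero hm' (sub_ne_zero.2 hl₁₂)
      set qq : ℚ := ((k₁ * l₂ - k₂ * l₁ : ℤ) : ℚ) / ((m * (l₁ - l₂) : ℤ) : ℚ) with hqq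
      refine ⟨qq, ?_⟩
      have hcast : (qq : ℝ)
          = ((k₁ * l₂ - k₂ * l₁ : ℤ) : ℝ) / ((m * (l₁ - l₂) : ℤ) : ℝ) := by
        rw [hqq]
        push_cast
        ring
      rw [hcast, eq_comm, ← mul_div_assoc, div_eq_iff hden]
      have key : B₂ * (d₁ * d₂ + 2 * β / 3) * ((m * (l₁ - l₂) : ℤ) : ℝ)
          = 2 * Real.pi * ((k₁ * l₂ - k₂ * l₁ : ℤ) : ℝ) := by
        have h3 : d₂ * (B₂ * (d₁ * d₂ + 2 * β / 3) * ((m * (l₁ - l₂) : ℤ) : ℝ)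
            - 2 * Real.pi * ((k₁ * l₂ - k₂ * l₁ : ℤ) : ℝ)) = 0 := by
          push_cast
          linear_combination (l₂:ℝ) * hB + ((m:ℝ) * B₂ * (d₁*d₂ + 2*β/3) - 2*Real.pi*(k₂:ℝ) - (m:ℝ)*B₂*(2*d₁*d₂ + 4*β/3)) * hA
        rcases mul_eq_zero.1 h3 with h | h
        · exact absurd h h₂
        · linarith
      linear_combination -key
  · rintro ⟨⟨q, hq⟩, r, hr⟩
    constructor
    · refine ⟨2 * Real.pi * (q.den : ℝ) / d₂, ?_, ?_⟩
      · apply div_ne_zero _ h₂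
        positivity
      · rw [hP]
        refine ⟨q.num, q.den, ?_, ?_⟩ <;> push_cast <;>
          simp only [zero_mul, sub_zero]
        · rw [hq]
          have : ((q.den : ℚ) : ℝ) * (q : ℝ) = ((q.num : ℚ) : ℝ) := by
            norm_cast
            rw [mul_comm]
            exact_mod_cast Rat.mul_den_eq_num q
          field_simp
          push_cast at this ⊢
          linear_combination this
        · field_simp
    · set s : ℚ := r * (q - 1) with hs
      have hsden : ((s.den : ℤ) : ℝ) ≠ 0 := by positivity
      have hmne : (s.den : ℤ) ≠ 0 := by exact_mod_cast s.den_nz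
      set pp : ℝ := ((s.den : ℤ):ℝ) * (B₁ * d₂ + B₂ * (-d₂ ^ 2 + 2 * β / 3)) / d₂ with hpp
      refine ⟨pp, (s.den : ℤ), hmne, ?_⟩
      rw [hP]
      have hpd : pp * d₂ = ((s.den : ℤ):ℝ) * (B₁ * d₂ + B₂ * (-d₂ ^ 2 + 2 * β / 3)) := by
        rw [hpp]
        field_simp
      refine ⟨s.num, 0, ?_, ?_⟩
      · have h0 : (s : ℝ) * ((s.den : ℤ) : ℝ) = ((s.num : ℤ) : ℝ) := by
          exact_mod_cast Rat.mul_den_eq_num s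
        have hsval : (r : ℝ) * ((q : ℝ) - 1) * ((s.den : ℤ) : ℝ) = ((s.num : ℤ) : ℝ) := by
          rw [hs] at h0
          push_cast at h0 ⊢
          linear_combination h0
        rw [hq] at hr ⊢
        linear_combination (q : ℝ) * hpd + ((s.den : ℤ):ℝ) * ((q:ℝ) - 1) * hr
          + 2 * Real.pi * hsval
      · push_cast
        linear_combination hpd
end
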